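/- For every real λ ≥ 0, the integral ∫_{-λ}^0 (1/(z+λ+1)^4) · e^{2z} dz multiplied by 3(λ+1)^3 is at most 4. -/

import Mathlib

/-!
The function `F z = 5 e^{2z} (z + λ) / (z + λ + 1)^5` vanishes at `z = -λ`, and with
`w = z + λ + 1` its derivative is `e^{2z} / w^4 + e^{2z} (3w - 5)^2 / w^6`. Hence the integral
is at most `F 0 = 5λ / (λ + 1)^5`, and `15λ / (λ + 1)^2 ≤ 4` because `4λ^2 - 7λ + 4` has
negative discriminant.
-/

open Real intervalIntegral

noncomputable def expMajorant (c z : ℝ) : ℝ := 5 * exp (2 * z) * (z + c - 1) / (z + c) ^ 5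

section Majorant

variable {c z : ℝ}

theorem hasDerivAt_expMajorant (hz : z + c ≠ 0) :
    HasDerivAt (expMajorant c)
      (5 * exp (2 * z) * (2 * (z + c) ^ 2 - 6 * (z + c) + 5) / (z + c) ^ 6) z := by
  have hexp : HasDerivAt (fun z => 5 * exp (2 * z)) (5 * (exp (2 * z) * 2)) z :=
    (((hasDerivAt_id' z).const_mul 2).exp.congr_deriv (by simp)).const_mul 5
  have hnum := hexp.fun_mul (((hasDerivAt_id' z).add_const c).sub_const 1)
  have hden := ((hasDerivAt_id' z).add_const c).fun_pow 5
  refine (hnum.fun_div hden (pow_ne_zero 5 hz)).congr_deriv ?_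
  field_simp
  ring

theorem exp_two_mul_div_pow_four_le_deriv_expMajorant (hz : 0 < z + c) :
    exp (2 * z) / (z + c) ^ 4 ≤
      5 * exp (2 * z) * (2 * (z + c) ^ 2 - 6 * (z + c) + 5) / (z + c) ^ 6 := by
  have hw : (z + c) ^ 6 = (z + c) ^ 2 * (z + c) ^ 4 := by ring
  rw [hw, ← div_div, div_le_div_iff_of_pos_right (by positivity),
    le_div_iff₀ (by positivity)]
  nlinarith [mul_nonneg (exp_pos (2 * z)).le (sq_nonneg (3 * (z + c) - 5))]

end Majorant

theorem integral_exp_two_mul_div_pow_four_le {a b c : ℝ} (hab : a ≤ b) (hac : 0 < a + c) :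
    ∫ z in a..b, exp (2 * z) / (z + c) ^ 4 ≤ expMajorant c b - expMajorant c a := by
  have hpos : ∀ z ∈ Set.Icc a b, 0 < z + c := fun z hz => by linarith [hz.1]
  have hcont : ContinuousOn (fun z => exp (2 * z) / (z + c) ^ 4) (Set.Icc a b) :=
    ContinuousOn.div (by fun_prop) (by fun_prop) fun z hz => (pow_pos (hpos z hz) 4).ne'
  have hpos' : ∀ z ∈ Set.Ioo a b, 0 < z + c := fun z hz => hpos z (Set.Ioo_subset_Icc_self hz)
  exact integral_le_sub_of_hasDeriv_right_of_le hab
    (fun z hz => (hasDerivAt_expMajorant (hpos z hz).ne').continuousAt.continuousWithinAt)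
    (fun z hz => (hasDerivAt_expMajorant (hpos' z hz).ne').hasDerivWithinAt)
    hcont.integrableOn_Icc
    (fun z hz => exp_two_mul_div_pow_four_le_deriv_expMajorant (hpos' z hz))

theorem stmt1 (lam : ℝ) (hlam : 0 ≤ lam) :
    3 * (lam + 1) ^ 3 * ∫ z in (-lam)..0, Real.exp (2 * z) / (z + lam + 1) ^ 4 ≤ 4 := by
  have hint : ∫ z in (-lam)..0, exp (2 * z) / (z + lam + 1) ^ 4 ≤ 5 * lam / (lam + 1) ^ 5 := by
    convert integral_exp_two_mul_div_pow_four_le (c := lam + 1) (neg_nonpos.mpr hlam)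
      (by linarith) using 1
    · simp only [add_assoc]
    · simp [expMajorant]
  calc 3 * (lam + 1) ^ 3 * ∫ z in (-lam)..0, exp (2 * z) / (z + lam + 1) ^ 4
      ≤ 3 * (lam + 1) ^ 3 * (5 * lam / (lam + 1) ^ 5) := by gcongr
    _ = 15 * lam / (lam + 1) ^ 2 := by field_simp; ring
    _ ≤ 4 := by
      rw [div_le_iff₀ (by positivity)]
      nlinarith [sq_nonneg (8 * lam - 7)]
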